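/- Let g : ℝ³ → ℝ³ be a bounded continuous function and let x : [0,∞) → ℝ³ range over a family of bounded continuous functions. Consider the response network y₁' = -y₁ + 3.4 tanh(y₁) - 1.6 tanh(y₂) + 0.7 tanh(y₃) + λg₁(x(t)), y₂' = -y₂ + 2.5 tanh(y₁) + 0.95 tanh(y₃) + λg₂(x(t)), y₃' = -y₃ - 12.5 tanh(y₁) + 0.5 tanh(y₂) + λg₃(x(t)). Then there exists λ₀ > 0 such that for every nonzero λ with |λ| ≤ λ₀ the outputs of this network are uniformly ultimately bounded: there exists B₀ > 0, and for every γ > 0 there exists T(γ) > 0, such that any solution y(t) with ‖y(t₀)‖ ≤ γ at some t₀ ≥ 0 (for any admissible input x(·)) satisfies ‖y(t)‖ < B₀ for every t ≥ t₀ + T(γ). In particular, the conditions of the uniform ultimate boundedness theorem are fulfilled for the Lyapunov function V(u) = (1/2)(u₁² + u₂² + u₃²) with a(r) = b(r) = r²/2, c(r) = r, B = 26√3, and μ = 1/(13√3). -/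

import Mathlib

open Real RealInnerProductSpace

noncomputable section

local notation "E" => EuclideanSpace ℝ (Fin 3)

lemma abs_tanh_le_one' (x : ℝ) : |Real.tanh x| ≤ 1 := by
  rw [Real.tanh_eq_sinh_div_cosh, abs_div, abs_of_pos (Real.cosh_pos x),
    div_le_one (Real.cosh_pos x), abs_le, Real.sinh_eq, Real.cosh_eq]
  constructor <;> nlinarith [Real.exp_pos x, Real.exp_pos (-x)]

/-- The unforced 3-cell HNN vector field
`u₁' = -u₁ + 3.4 tanh u₁ - 1.6 tanh u₂ + 0.7 tanh u₃`,
`u₂' = -u₂ + 2.5 tanh u₁ + 0.95 tanh u₃`,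
`u₃' = -u₃ - 12.5 tanh u₁ + 0.5 tanh u₂`. -/
def F₁ (u : E) : E :=
  WithLp.toLp 2 ![-(u 0) + 3.4 * Real.tanh (u 0) - 1.6 * Real.tanh (u 1) + 0.7 * Real.tanh (u 2),
    -(u 1) + 2.5 * Real.tanh (u 0) + 0.95 * Real.tanh (u 2),
    -(u 2) - 12.5 * Real.tanh (u 0) + 0.5 * Real.tanh (u 1)]

/-- The response network: the unforced field plus the external input `λ g(xv)`. -/
def resp₁ (lam : ℝ) (g : E → E) (xv y : E) : E :=
  (WithLp.toLp 2 (fun i => F₁ y i + lam * g xv i) : E)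

lemma norm_sq_expand (u : E) : ‖u‖ ^ 2 = u 0 ^ 2 + u 1 ^ 2 + u 2 ^ 2 := by
  rw [EuclideanSpace.norm_eq, Real.sq_sqrt (by positivity)]
  simp [Fin.sum_univ_three, Real.norm_eq_abs, sq_abs]

set_option maxHeartbeats 1000000 in
lemma key_bound (u : E) : ⟪u, F₁ u⟫ ≤ -‖u‖ ^ 2 + 13 * Real.sqrt 3 * ‖u‖ := by
  have hns := norm_sq_expand u
  have hinner : ⟪u, F₁ u⟫ = u 0 * F₁ u 0 + u 1 * F₁ u 1 + u 2 * F₁ u 2 := by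
    simp [PiLp.inner_apply, Fin.sum_univ_three, RCLike.inner_apply, conj_trivial]
    ring
  have hF0 : F₁ u 0 = -(u 0) + 3.4 * Real.tanh (u 0) - 1.6 * Real.tanh (u 1)
      + 0.7 * Real.tanh (u 2) := rfl
  have hF1 : F₁ u 1 = -(u 1) + 2.5 * Real.tanh (u 0) + 0.95 * Real.tanh (u 2) := rfl
  have hF2 : F₁ u 2 = -(u 2) - 12.5 * Real.tanh (u 0) + 0.5 * Real.tanh (u 1) := rfl
  have hb : ∀ i j : Fin 3, |u i * Real.tanh (u j)| ≤ |u i| := fun i j => by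
    rw [abs_mul]
    exact mul_le_of_le_one_right (abs_nonneg _) (abs_tanh_le_one' _)
  have hs3 : (Real.sqrt 3) ^ 2 = 3 := Real.sq_sqrt (by norm_num)
  have hs3n : 0 ≤ Real.sqrt 3 := Real.sqrt_nonneg 3
  have hn : 0 ≤ ‖u‖ := norm_nonneg u
  have hsum : |u 0| + |u 1| + |u 2| ≤ Real.sqrt 3 * ‖u‖ := by
    nlinarith [sq_nonneg (|u 0| - |u 1|), sq_nonneg (|u 0| - |u 2|),
      sq_nonneg (|u 1| - |u 2|), sq_abs (u 0), sq_abs (u 1), sq_abs (u 2),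
      abs_nonneg (u 0), abs_nonneg (u 1), abs_nonneg (u 2),
      mul_nonneg hs3n hn]
  rw [hinner, hF0, hF1, hF2]
  have h00 := abs_le.mp (hb 0 0)
  have h01 := abs_le.mp (hb 0 1)
  have h02 := abs_le.mp (hb 0 2)
  have h10 := abs_le.mp (hb 1 0)
  have h12 := abs_le.mp (hb 1 2)
  have h20 := abs_le.mp (hb 2 0)
  have h21 := abs_le.mp (hb 2 1)
  nlinarith [h00.1, h00.2, h01.1, h01.2, h02.1, h02.2, h10.1, h10.2,
    h12.1, h12.2, h20.1, h20.2, h21.1, h21.2, abs_nonneg (u 0), abs_nonneg (u 1),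
    abs_nonneg (u 2)]

set_option maxHeartbeats 1000000 in
/-- For the response network obtained from the chaotic 3-cell HNN
`(persistence3)` by the bounded continuous input `λ g(x(t))`, the conditions of the uniform
ultimate boundedness theorem hold for `V(u) = ½(u₁²+u₂²+u₃²)`, `a(r) = b(r) = r²/2`,
`c(r) = r`, `B = 26√3`, `μ = 1/(13√3)`, and there is `λ₀ > 0` such that for every nonzero
`λ` with `|λ| ≤ λ₀` the outputs of the response network are uniformly ultimately bounded. -/
theorem uniform_ultimate_boundedness_persistence_response
    (g : E → E) (hg_cont : Continuous g) (Mg : ℝ) (hg_bdd : ∀ v, ‖g v‖ ≤ Mg) :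
    (∀ u : E, 26 * Real.sqrt 3 ≤ ‖u‖ → ⟪u, F₁ u⟫ ≤ -(‖u‖ ^ 2 / 2)) ∧
    (∀ r : ℝ, 26 * Real.sqrt 3 ≤ r → 0 < r ∧ r ≤ 1 / (13 * Real.sqrt 3) * (r ^ 2 / 2)) ∧
    (∃ lam₀ > (0 : ℝ), ∀ lam : ℝ, lam ≠ 0 → |lam| ≤ lam₀ →
      ∃ B₀ > (0 : ℝ), ∀ γ > (0 : ℝ), ∃ T > (0 : ℝ),
        ∀ x : ℝ → E, Continuous x → (∃ Mx : ℝ, ∀ t, 0 ≤ t → ‖x t‖ ≤ Mx) →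
          ∀ y : ℝ → E, (∀ t ∈ Set.Ici (0 : ℝ),
              HasDerivAt y (resp₁ lam g (x t) (y t)) t) →
            ∀ t₀ : ℝ, 0 ≤ t₀ → ‖y t₀‖ ≤ γ →
              ∀ t, t₀ + T ≤ t → ‖y t‖ < B₀) := by
  have hs3 : (Real.sqrt 3) ^ 2 = 3 := Real.sq_sqrt (by norm_num)
  have hs3p : 0 < Real.sqrt 3 := Real.sqrt_pos.mpr (by norm_num)
  have hMg0 : 0 ≤ Mg := le_trans (norm_nonneg _) (hg_bdd 0)
  refine ⟨?_, ?_, ?_⟩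
  · -- first Lyapunov condition
    intro u hu
    have hk := key_bound u
    have hn : 0 ≤ ‖u‖ := norm_nonneg u
    nlinarith [mul_le_mul_of_nonneg_right hu hn]
  · -- second condition
    intro r hr
    have hrp : 0 < r := lt_of_lt_of_le (by positivity) hr
    refine ⟨hrp, ?_⟩
    rw [one_div_mul_eq_div, le_div_iff₀ (by positivity)]
    nlinarith [mul_le_mul_of_nonneg_right hr hrp.le]
  · -- ultimate boundedness
    refine ⟨1, one_pos, fun lam _hne hlam => ?_⟩
    set C : ℝ := 13 * Real.sqrt 3 + Mg with hCdef
    have hC0 : 0 < C := by positivity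
    set K : ℝ := C ^ 2 / 2 with hKdef
    have hK0 : 0 ≤ K := by positivity
    refine ⟨Real.sqrt (2 * K + 2), Real.sqrt_pos.mpr (by positivity), fun γ hγ => ?_⟩
    refine ⟨Real.log (γ ^ 2 / 2 + 2), Real.log_pos (by nlinarith), ?_⟩
    intro x _hxc _hxb y hy t₀ ht₀ hyγ t ht
    set T : ℝ := Real.log (γ ^ 2 / 2 + 2) with hTdef
    -- derivative inequality along the solution
    have hIneq : ∀ s : ℝ, 0 ≤ s →
        ⟪y s, y s⟫ / 2 + ⟪y s, resp₁ lam g (x s) (y s)⟫ ≤ K := by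
      intro s hs
      have hk := key_bound (y s)
      have hresp : resp₁ lam g (x s) (y s) = F₁ (y s) + lam • g (x s) := rfl
      have h1 : ⟪y s, resp₁ lam g (x s) (y s)⟫
          = ⟪y s, F₁ (y s)⟫ + lam * ⟪y s, g (x s)⟫ := by
        rw [hresp, inner_add_right, real_inner_smul_right]
      have h2 : |⟪y s, g (x s)⟫| ≤ ‖y s‖ * Mg :=
        (abs_real_inner_le_norm _ _).trans
          (mul_le_mul_of_nonneg_left (hg_bdd _) (norm_nonneg _))
      have h3 : lam * ⟪y s, g (x s)⟫ ≤ ‖y s‖ * Mg := by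
        calc lam * ⟪y s, g (x s)⟫ ≤ |lam * ⟪y s, g (x s)⟫| := le_abs_self _
          _ = |lam| * |⟪y s, g (x s)⟫| := abs_mul _ _
          _ ≤ 1 * (‖y s‖ * Mg) := by
              apply mul_le_mul hlam h2 (abs_nonneg _) zero_le_one
          _ = ‖y s‖ * Mg := one_mul _
      have h4 : ⟪y s, y s⟫ = ‖y s‖ ^ 2 := real_inner_self_eq_norm_sq (y s)
      rw [h1, h4]
      nlinarith [sq_nonneg (‖y s‖ - C), norm_nonneg (y s)]
    -- the auxiliary function h is monotone on [t₀, ∞)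
    set h : ℝ → ℝ := fun s => K * Real.exp s - Real.exp s * (⟪y s, y s⟫ / 2) with hhdef
    have hder : ∀ s : ℝ, t₀ ≤ s →
        HasDerivAt h (K * Real.exp s - (Real.exp s * (⟪y s, y s⟫ / 2)
          + Real.exp s * ((⟪y s, resp₁ lam g (x s) (y s)⟫
            + ⟪resp₁ lam g (x s) (y s), y s⟫) / 2))) s := by
      intro s hs
      have hys : HasDerivAt y (resp₁ lam g (x s) (y s)) s := hy s (le_trans ht₀ hs)
      have h1 : HasDerivAt (fun t => (⟪y t, y t⟫ : ℝ))
          (⟪y s, resp₁ lam g (x s) (y s)⟫ + ⟪resp₁ lam g (x s) (y s), y s⟫) s :=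
        HasDerivAt.inner ℝ hys hys
      have h2 := h1.div_const 2
      have h3 := (Real.hasDerivAt_exp s).mul h2
      have h4 := ((Real.hasDerivAt_exp s).const_mul K).sub h3
      exact h4
    have hcont : ContinuousOn h (Set.Ici t₀) := fun s hs =>
      (hder s hs).continuousAt.continuousWithinAt
    have hdiff : DifferentiableOn ℝ h (interior (Set.Ici t₀)) := by
      rw [interior_Ici]
      exact fun s hs => ((hder s (le_of_lt hs)).differentiableAt).differentiableWithinAt
    have hderiv_nonneg : ∀ s ∈ interior (Set.Ici t₀), 0 ≤ deriv h s := by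
      rw [interior_Ici]
      intro s hs
      rw [(hder s (le_of_lt hs)).deriv]
      have hI := hIneq s (le_trans ht₀ (le_of_lt hs))
      have hcomm : ⟪resp₁ lam g (x s) (y s), y s⟫ = ⟪y s, resp₁ lam g (x s) (y s)⟫ :=
        real_inner_comm _ _
      have hep := Real.exp_pos s
      rw [hcomm]
      nlinarith [hep]
    have hmono : MonotoneOn h (Set.Ici t₀) :=
      monotoneOn_of_deriv_nonneg (convex_Ici t₀) hcont hdiff hderiv_nonneg
    have hTpos : 0 < T := Real.log_pos (by nlinarith)
    have htt : t₀ ≤ t := le_trans (by linarith) ht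
    have hht : h t₀ ≤ h t := hmono Set.self_mem_Ici htt htt
    -- unfold and conclude
    set W : ℝ → ℝ := fun s => ⟪y s, y s⟫ / 2 with hWdef
    have hW0 : ∀ s, 0 ≤ W s := fun s => by
      have : (0:ℝ) ≤ ⟪y s, y s⟫ := real_inner_self_nonneg
      simp only [hWdef]; linarith
    have hht' : K * Real.exp t₀ - Real.exp t₀ * W t₀ ≤ K * Real.exp t - Real.exp t * W t :=
      hht
    have het : (0:ℝ) < Real.exp t := Real.exp_pos t
    have het₀ : (0:ℝ) < Real.exp t₀ := Real.exp_pos t₀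
    have hWt : Real.exp t * W t ≤ K * Real.exp t + Real.exp t₀ * W t₀ := by
      nlinarith [mul_nonneg hK0 het₀.le]
    have hWt2 : W t ≤ K + Real.exp (t₀ - t) * W t₀ := by
      have heq : Real.exp t * (K + Real.exp (t₀ - t) * W t₀)
          = K * Real.exp t + Real.exp t₀ * W t₀ := by
        rw [Real.exp_sub]
        field_simp
      have := hWt.trans_eq heq.symm
      exact (mul_le_mul_iff_right₀ het).mp this
    -- bound the tail term
    have hWt0 : W t₀ ≤ γ ^ 2 / 2 := by
      have : ⟪y t₀, y t₀⟫ = ‖y t₀‖ ^ 2 := real_inner_self_eq_norm_sq (y t₀)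
      simp only [hWdef, this]
      nlinarith [norm_nonneg (y t₀), pow_le_pow_left₀ (norm_nonneg (y t₀)) hyγ 2]
    have hexpT : Real.exp (t₀ - t) ≤ (γ ^ 2 / 2 + 2)⁻¹ := by
      have h1 : t₀ - t ≤ -T := by linarith
      calc Real.exp (t₀ - t) ≤ Real.exp (-T) := Real.exp_le_exp.mpr h1
        _ = (γ ^ 2 / 2 + 2)⁻¹ := by
            rw [Real.exp_neg, hTdef, Real.exp_log (by positivity)]
    have hAq : Real.exp (t₀ - t) * W t₀ < 1 := by
      have hA0 : 0 < Real.exp (t₀ - t) := Real.exp_pos _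
      have hg2 : (0:ℝ) < γ ^ 2 / 2 + 2 := by positivity
      calc Real.exp (t₀ - t) * W t₀ ≤ (γ ^ 2 / 2 + 2)⁻¹ * (γ ^ 2 / 2) := by
            apply mul_le_mul hexpT hWt0 (hW0 t₀) (by positivity)
        _ < 1 := by
            rw [inv_mul_eq_div, div_lt_one hg2]
            linarith
    have hWfin : W t < K + 1 := by linarith
    have hnorm : ‖y t‖ ^ 2 < 2 * K + 2 := by
      have : ⟪y t, y t⟫ = ‖y t‖ ^ 2 := real_inner_self_eq_norm_sq (y t)
      simp only [hWdef, this] at hWfin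
      linarith
    exact (Real.lt_sqrt (norm_nonneg _)).mpr hnorm
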